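/- Let B, R > 0 and let L > 6R. Then 2·d(L − R) > S₀(L), where d is the Agmon distance and S₀ the tunneling action. -/
import Mathlib


/-- The Agmon distance function `d` of the paper, with parameters `B`, `R`. -/
noncomputable def agmonDist (B R r : ℝ) : ℝ :=
  B / 4 * (r ^ 2 - R ^ 2) - B * R ^ 2 / 2 * Real.log (r / R)

/-- The tunneling action `S₀` of the paper, with parameters `B`, `R`. -/
noncomputable def S0 (B R ℓ : ℝ) : ℝ :=
  B * ℓ / 4 * Real.sqrt (ℓ ^ 2 - 4 * R ^ 2)
    - B * R ^ 2 * Real.log ((ℓ + Real.sqrt (ℓ ^ 2 - 4 * R ^ 2)) / (2 * R))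

/-- if `L > 6R` then `2·d(L − R) > S₀(L)`. -/
theorem two_agmonDist_gt_S0 (B R L : ℝ) (hB : 0 < B) (hR : 0 < R) (hL : 6 * R < L) :
    S0 B R L < 2 * agmonDist B R (L - R) := by
  have hL0 : 0 < L := by linarith
  set s := Real.sqrt (L ^ 2 - 4 * R ^ 2) with hs
  have hs0 : 0 ≤ s := Real.sqrt_nonneg _
  have hs2 : s ^ 2 = L ^ 2 - 4 * R ^ 2 := Real.sq_sqrt (by nlinarith)
  have hsub : s < 2 * L - 4 * R := by nlinarith
  have hslb : L - 2 * R ≤ s := by nlinarith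
  have hlog : Real.log ((L - R) / R) ≤ Real.log ((L + s) / (2 * R)) := by
    apply Real.log_le_log (div_pos (by linarith) hR)
    rw [div_le_div_iff₀ hR (by positivity)]
    nlinarith
  unfold S0 agmonDist
  rw [← hs]
  nlinarith [mul_le_mul_of_nonneg_left hlog (by positivity : (0:ℝ) ≤ B * R ^ 2),
    mul_lt_mul_of_pos_left hsub (by positivity : (0:ℝ) < B * L / 4)]
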